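/- Define f̄_T(x) = -Ψ(1)Φ(x₁) + Σ_{i=2}^{T} [Ψ(-x_{i-1})Φ(-x_i) - Ψ(x_{i-1})Φ(x_i)]. Then f̄_T(0) - inf_x f̄_T(x) ≤ 12T. -/

import Mathlib

open scoped BigOperators

/-- Ψ(x) = 0 for x ≤ 1/2 and exp(1 - 1/(2x-1)²) for x > 1/2. -/
noncomputable def Psi (x : ℝ) : ℝ :=
  if x ≤ 1/2 then 0 else Real.exp (1 - 1 / (2*x - 1)^2)

/-- Φ(y) = √e · ∫_{-∞}^y e^{-t²/2} dt. -/
noncomputable def Phi (y : ℝ) : ℝ :=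
  Real.sqrt (Real.exp 1) * ∫ t in Set.Iic y, Real.exp (-t^2/2)

/-- The Nesterov-style hard instance f̄_T (0-indexed coordinates). -/
noncomputable def fbar (T : ℕ) (x : Fin T → ℝ) : ℝ :=
  ∑ i : Fin T,
    if (i : ℕ) = 0 then -(Psi 1 * Phi (x i))
    else Psi (-(x ⟨i.1 - 1, lt_of_le_of_lt (Nat.sub_le _ _) i.isLt⟩)) * Phi (-(x i))
         - Psi (x ⟨i.1 - 1, lt_of_le_of_lt (Nat.sub_le _ _) i.isLt⟩) * Phi (x i)

/-- j-th partial derivative of f̄_T at x. -/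
noncomputable def fpartial (T : ℕ) (x : Fin T → ℝ) (j : Fin T) : ℝ :=
  deriv (fun s => fbar T (Function.update x j s)) (x j)

/-!
Ψ takes values in `[0, e]` and vanishes on `(-∞, 1/2]`, while Φ takes values in `[0, √e · √(2π)]`.
Hence every summand of `f̄_T(0)` is `≤ 0`, and every summand of `f̄_T(x)` is at least
`-e · √e · √(2π) > -12`.
-/

open Real

lemma Psi_nonneg (x : ℝ) : 0 ≤ Psi x := by
  unfold Psi
  split_ifs <;> positivity

lemma Psi_le_exp_one (x : ℝ) : Psi x ≤ exp 1 := by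
  unfold Psi
  split_ifs
  · positivity
  · exact exp_le_exp.mpr (sub_le_self _ (by positivity))

lemma Psi_zero : Psi 0 = 0 := by
  norm_num [Psi]

lemma Phi_nonneg (y : ℝ) : 0 ≤ Phi y :=
  mul_nonneg (sqrt_nonneg _) <|
    MeasureTheory.setIntegral_nonneg measurableSet_Iic fun _ _ => (exp_pos _).le

lemma integral_exp_neg_sq_div_two : ∫ t : ℝ, exp (-t ^ 2 / 2) = √(2 * π) := by
  have h := integral_gaussian (1 / 2)
  simp only [show ∀ t : ℝ, -(1 / 2) * t ^ 2 = -t ^ 2 / 2 by intro t; ring] at h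
  rw [h]
  congr 1
  field_simp

lemma Phi_le (y : ℝ) : Phi y ≤ √(exp 1) * √(2 * π) := by
  have hint : MeasureTheory.Integrable fun t : ℝ => exp (-t ^ 2 / 2) := by
    convert integrable_exp_neg_mul_sq (b := (1 : ℝ) / 2) (by norm_num) using 2 with t
    ring_nf
  refine mul_le_mul_of_nonneg_left ?_ (sqrt_nonneg _)
  rw [← integral_exp_neg_sq_div_two]
  exact MeasureTheory.setIntegral_le_integral hint (.of_forall fun _ => (exp_pos _).le)

lemma exp_one_mul_sqrt_exp_one_mul_sqrt_two_pi_le : exp 1 * (√(exp 1) * √(2 * π)) ≤ 12 := by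
  have he : exp 1 ≤ 2.7183 := by linarith [exp_one_lt_d9]
  have hse : √(exp 1) ≤ 1.65 := sqrt_le_iff.mpr ⟨by norm_num, by linarith⟩
  have hsp : √(2 * π) ≤ 2.52 := sqrt_le_iff.mpr ⟨by norm_num, by linarith [pi_lt_d2]⟩
  calc exp 1 * (√(exp 1) * √(2 * π)) ≤ 2.7183 * (1.65 * 2.52) := by gcongr
    _ ≤ 12 := by norm_num

lemma Psi_mul_Phi_le (a b : ℝ) : Psi a * Phi b ≤ 12 :=
  (mul_le_mul (Psi_le_exp_one a) (Phi_le b) (Phi_nonneg b) (exp_pos 1).le).trans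
    exp_one_mul_sqrt_exp_one_mul_sqrt_two_pi_le

lemma neg_twelve_le_Psi_mul_Phi_sub (a b c d : ℝ) : -12 ≤ Psi a * Phi b - Psi c * Phi d := by
  linarith [mul_nonneg (Psi_nonneg a) (Phi_nonneg b), Psi_mul_Phi_le c d]

lemma fbar_zero_nonpos (T : ℕ) : fbar T 0 ≤ 0 :=
  Finset.sum_nonpos fun i _ => by
    split_ifs
    · simpa using mul_nonneg (Psi_nonneg 1) (Phi_nonneg 0)
    · simp [Psi_zero]

lemma neg_twelve_mul_le_fbar (T : ℕ) (x : Fin T → ℝ) : -(12 * T : ℝ) ≤ fbar T x :=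
  calc -(12 * T : ℝ) = ∑ _i : Fin T, (-12 : ℝ) := by simp [mul_comm]
    _ ≤ fbar T x := Finset.sum_le_sum fun i _ => by
        split_ifs
        · linarith [Psi_mul_Phi_le 1 (x i)]
        · exact neg_twelve_le_Psi_mul_Phi_sub _ _ _ _

theorem stmt_6_general (T : ℕ) :
    ∀ x : Fin T → ℝ, fbar T 0 - fbar T x ≤ 12 * T := fun x => by
  linarith [fbar_zero_nonpos T, neg_twelve_mul_le_fbar T x]

/-- f̄_T(0) - inf f̄_T ≤ 12T (stated as: f̄_T(0) - f̄_T(x) ≤ 12T for every x). -/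
theorem stmt_6 (T : ℕ) (hT : 1 ≤ T) :
    ∀ x : Fin T → ℝ, fbar T 0 - fbar T x ≤ 12 * T :=
  stmt_6_general T
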